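/- arXiv:math/0206059 — 3 statements merged into one kernel-verified Lean document; each statement's English description precedes it below -/
import Mathlib

section
/- Let n ≥ 1 and let p₁ < p₂ < ⋯ < pₙ be prime numbers with 5 ≤ p₁. For each j set ξⱼ = i·√(pⱼ(pⱼ − 2)) ∈ ℂ. Then the field ℚ(ξ₁, …, ξₙ) (the subfield of ℂ generated over ℚ by ξ₁, …, ξₙ) has degree exactly 2ⁿ over ℚ. -/
/-!
Each `ξ_p` squares to the rational `-p(p-2)`. If `x` with `x² ∈ ℚ` lies in `K(y)` with
`y² ∈ ℚ`, then writing `x = a + b y` and squaring shows `x ∈ K` or `x y ∈ K`; iterating,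
`ξ_P ∈ ℚ(ξ_q : q ∈ s)` would make `ξ_P ∏_{q ∈ t} ξ_q` rational for some `t ⊆ s`, i.e.
`±P(P-2)∏_{q ∈ t} q(q-2)` a rational square. Adjoining the primes in increasing order makes `P`
the largest, so it divides none of the `q` and `q - 2` and that number has `P`-adic valuation `1`.
Hence every new `ξ_P` doubles the degree.
-/

/-- The complex number ξ_p = i·√(p(p−2)). -/
noncomputable def xi (p : ℕ) : ℂ :=
  Complex.I * (Real.sqrt ((p : ℝ) * ((p : ℝ) - 2)) : ℝ)

open IntermediateField Polynomial

section MultiquadraticExtension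

variable {F L : Type*} [Field F] [Field L] [Algebra F L]

lemma exists_eq_add_mul_of_mem_adjoin_simple {K : IntermediateField F L} {x y : L}
    (hy : y ^ 2 ∈ K) (hx : x ∈ K⟮y⟯) : ∃ a ∈ K, ∃ b ∈ K, x = a + b * y := by
  have hint : IsIntegral K y := .of_pow two_pos (isIntegral_algebraMap (x := (⟨y ^ 2, hy⟩ : K)))
  replace hx : x ∈ Algebra.adjoin K {y} := by
    rwa [← adjoin_simple_toSubalgebra_of_isAlgebraic hint.isAlgebraic]
  induction hx using Algebra.adjoin_induction with
  | mem z hz => exact ⟨0, zero_mem K, 1, one_mem K, by simp [Set.mem_singleton_iff.1 hz]⟩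
  | algebraMap r => exact ⟨r, r.2, 0, zero_mem K, by simp⟩
  | add u v _ _ ihu ihv =>
    obtain ⟨a, ha, b, hb, rfl⟩ := ihu
    obtain ⟨c, hc, d, hd, rfl⟩ := ihv
    exact ⟨a + c, add_mem ha hc, b + d, add_mem hb hd, by ring⟩
  | mul u v _ _ ihu ihv =>
    obtain ⟨a, ha, b, hb, rfl⟩ := ihu
    obtain ⟨c, hc, d, hd, rfl⟩ := ihv
    exact ⟨a * c + b * d * y ^ 2, add_mem (mul_mem ha hc) (mul_mem (mul_mem hb hd) hy),
      a * d + b * c, add_mem (mul_mem ha hd) (mul_mem hb hc), by ring⟩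

lemma mem_or_mul_mem_of_mem_adjoin_simple [NeZero (2 : L)] {K : IntermediateField F L}
    {x y : L} (hx : x ^ 2 ∈ K) (hy : y ^ 2 ∈ K) (hxy : x ∈ K⟮y⟯) : x ∈ K ∨ x * y ∈ K := by
  obtain ⟨a, ha, b, hb, rfl⟩ := exists_eq_add_mul_of_mem_adjoin_simple hy hxy
  have h2aby : 2 * a * b * y ∈ K := by
    have : 2 * a * b * y = (a + b * y) ^ 2 - a ^ 2 - b ^ 2 * y ^ 2 := by ring
    rw [this]
    exact sub_mem (sub_mem hx (pow_mem ha 2)) (mul_mem (pow_mem hb 2) hy)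
  rcases eq_or_ne (2 * a * b) 0 with h0 | h0
  · obtain rfl | rfl : a = 0 ∨ b = 0 := by simpa [two_ne_zero] using h0
    · right
      rw [zero_add, mul_assoc, ← sq]
      exact mul_mem hb hy
    · left
      simpa using ha
  · have hyK : y ∈ K := by
      have h2ab : 2 * a * b ∈ K := mul_mem (mul_mem (ofNat_mem K 2) ha) hb
      simpa only [inv_mul_cancel_left₀ h0] using mul_mem (inv_mem h2ab) h2aby
    exact Or.inl (add_mem ha (mul_mem hb hyK))

lemma adjoin_insert_eq_restrictScalars (S : Set L) (y : L) :
    adjoin F (insert y S) = (adjoin (adjoin F S) {y}).restrictScalars F := by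
  rw [adjoin_adjoin_left, Set.union_singleton]

lemma exists_mul_prod_mem_bot_of_mem_adjoin [NeZero (2 : L)] {ι : Type*} [DecidableEq ι]
    (v : ι → L) (s : Finset ι) (hv : ∀ i ∈ s, v i ^ 2 ∈ (⊥ : IntermediateField F L))
    {x : L} (hx : x ^ 2 ∈ (⊥ : IntermediateField F L)) (hxs : x ∈ adjoin F (v '' s)) :
    ∃ t ⊆ s, x * ∏ i ∈ t, v i ∈ (⊥ : IntermediateField F L) := by
  induction s using Finset.induction_on generalizing x with
  | empty => exact ⟨∅, subset_rfl, by simpa using hxs⟩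
  | insert i s his ih =>
    have hvs : ∀ j ∈ s, v j ^ 2 ∈ (⊥ : IntermediateField F L) :=
      fun j hj => hv j (Finset.mem_insert_of_mem hj)
    have hvi : v i ^ 2 ∈ (⊥ : IntermediateField F L) := hv i (Finset.mem_insert_self i s)
    rw [Finset.coe_insert, Set.image_insert_eq, adjoin_insert_eq_restrictScalars,
      mem_restrictScalars] at hxs
    have hbot : (⊥ : IntermediateField F L) ≤ adjoin F (v '' s) := bot_le
    rcases mem_or_mul_mem_of_mem_adjoin_simple (hbot hx) (hbot hvi) hxs with hxK | hxK
    · obtain ⟨t, hts, ht⟩ := ih hvs hx hxK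
      exact ⟨t, hts.trans (Finset.subset_insert i s), ht⟩
    · obtain ⟨t, hts, ht⟩ := ih hvs (by rw [mul_pow]; exact mul_mem hx hvi) hxK
      refine ⟨insert i t, Finset.insert_subset_insert i hts, ?_⟩
      rwa [Finset.prod_insert (fun hit => his (hts hit)), ← mul_assoc]

lemma finrank_adjoin_simple_eq_two {K : Type*} [Field K] [Algebra K L] {y : L}
    (hy : y ^ 2 ∈ (algebraMap K L).range) (hyK : y ∉ (algebraMap K L).range) :
    Module.finrank K K⟮y⟯ = 2 := by
  obtain ⟨c, hc⟩ := hy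
  have hint : IsIntegral K y := .of_pow two_pos (hc ▸ isIntegral_algebraMap)
  have hle : (minpoly K y).natDegree ≤ 2 := by
    have hroot : aeval y (X ^ 2 - C c) = 0 := by simp [hc]
    have := minpoly.degree_le_of_ne_zero K y (monic_X_pow_sub_C c two_ne_zero).ne_zero hroot
    rw [degree_X_pow_sub_C two_pos] at this
    exact natDegree_le_of_degree_le this
  have hge : 2 ≤ (minpoly K y).natDegree := (minpoly.two_le_natDegree_iff hint).2 hyK
  rw [adjoin.finrank hint]
  omega

lemma finrank_adjoin_insert_eq_two_mul {S : Set L} {y : L} (hy : y ^ 2 ∈ adjoin F S)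
    (hyS : y ∉ adjoin F S) :
    Module.finrank F (adjoin F (insert y S)) = 2 * Module.finrank F (adjoin F S) := by
  have hdeg : Module.finrank (adjoin F S) (adjoin F S)⟮y⟯ = 2 :=
    finrank_adjoin_simple_eq_two ⟨⟨y ^ 2, hy⟩, rfl⟩ fun ⟨z, hz⟩ => hyS (hz ▸ z.2)
  rw [adjoin_insert_eq_restrictScalars, mul_comm, ← hdeg]
  exact (Module.finrank_mul_finrank F (adjoin F S) (adjoin F S)⟮y⟯).symm

end MultiquadraticExtension

lemma xi_sq {p : ℕ} (hp : 2 ≤ p) : xi p ^ 2 = -((p * (p - 2) : ℕ) : ℂ) := by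
  have hp' : (2 : ℝ) ≤ p := by exact_mod_cast hp
  rw [xi, mul_pow, Complex.I_sq, ← Complex.ofReal_pow, Real.sq_sqrt (by nlinarith)]
  push_cast [Nat.cast_sub hp]
  ring

lemma xi_sq_mem_bot {p : ℕ} (hp : 2 ≤ p) : xi p ^ 2 ∈ (⊥ : IntermediateField ℚ ℂ) :=
  ⟨-(p * (p - 2) : ℕ), by simp [xi_sq hp]⟩

lemma padicValRat_sq_ne_one (P : ℕ) [Fact P.Prime] (r : ℚ) : padicValRat P (r ^ 2) ≠ 1 := by
  rw [padicValRat.pow]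
  omega

lemma padicValNat_mul_sub_two_mul_prod {P : ℕ} (hP : P.Prime) (hP3 : 3 ≤ P) {t : Finset ℕ}
    (ht : ∀ q ∈ t, 3 ≤ q ∧ q < P) :
    padicValNat P (P * (P - 2) * ∏ q ∈ t, q * (q - 2)) = 1 := by
  have : Fact P.Prime := ⟨hP⟩
  have hlt : ∀ m, 0 < m → m < P → ¬ P ∣ m :=
    fun m hm hmP hd => (Nat.le_of_dvd hm hd).not_gt hmP
  have hprod : ¬ P ∣ ∏ q ∈ t, q * (q - 2) := by
    rw [Prime.dvd_finsetProd_iff hP.prime]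
    rintro ⟨q, hq, hd⟩
    obtain ⟨hq3, hqP⟩ := ht q hq
    rcases hP.dvd_mul.1 hd with hd | hd
    · exact hlt q (by omega) hqP hd
    · exact hlt (q - 2) (by omega) (by omega) hd
  have hprod0 : ∏ q ∈ t, q * (q - 2) ≠ 0 := fun h => hprod (h ▸ dvd_zero P)
  rw [padicValNat.mul (Nat.mul_ne_zero hP.ne_zero (by omega)) hprod0,
    padicValNat.mul hP.ne_zero (by omega), padicValNat.self hP.one_lt,
    padicValNat.eq_zero_of_not_dvd (hlt (P - 2) (by omega) (by omega)),
    padicValNat.eq_zero_of_not_dvd hprod]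

lemma xi_notMem_adjoin {P : ℕ} (hP : P.Prime) (hP3 : 3 ≤ P) {s : Finset ℕ}
    (hs : ∀ q ∈ s, 3 ≤ q ∧ q < P) : xi P ∉ adjoin ℚ (xi '' s) := by
  intro hmem
  obtain ⟨t, hts, hbot⟩ := exists_mul_prod_mem_bot_of_mem_adjoin xi s
    (fun q hq => xi_sq_mem_bot (by linarith [hs q hq])) (xi_sq_mem_bot (by omega)) hmem
  obtain ⟨r, hr⟩ := mem_bot.1 hbot
  have ht : ∀ q ∈ t, 3 ≤ q ∧ q < P := fun q hq => hs q (hts hq)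
  have hsq : r ^ 2 = -(-1) ^ t.card * ((P * (P - 2) * ∏ q ∈ t, q * (q - 2) : ℕ) : ℚ) := by
    apply (algebraMap ℚ ℂ).injective
    have hterm : ∀ q ∈ t, xi q ^ 2 = -((q * (q - 2) : ℕ) : ℂ) :=
      fun q hq => xi_sq (by linarith [ht q hq])
    simp only [map_pow, hr, mul_pow, ← Finset.prod_pow, Finset.prod_congr rfl hterm,
      Finset.prod_neg, xi_sq (by omega : 2 ≤ P)]
    push_cast
    ring
  have : Fact P.Prime := ⟨hP⟩
  apply padicValRat_sq_ne_one P r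
  rcases neg_one_pow_eq_or ℚ t.card with h | h <;>
  · simp only [hsq, h, neg_mul, one_mul, neg_neg, padicValRat.neg, padicValRat.of_nat,
      padicValNat_mul_sub_two_mul_prod hP hP3 ht, Nat.cast_one]

lemma finrank_adjoin_xi_image {s : Finset ℕ} (hs : ∀ p ∈ s, p.Prime ∧ 3 ≤ p) :
    Module.finrank ℚ (adjoin ℚ (xi '' s)) = 2 ^ s.card := by
  induction s using Finset.induction_on_max with
  | empty => simp
  | insert P s hlt ih =>
    obtain ⟨⟨hP, hP3⟩, hs⟩ := Finset.forall_mem_insert _ _ _ |>.1 hs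
    have hbot : (⊥ : IntermediateField ℚ ℂ) ≤ adjoin ℚ (xi '' s) := bot_le
    rw [Finset.coe_insert, Set.image_insert_eq,
      finrank_adjoin_insert_eq_two_mul (hbot (xi_sq_mem_bot (by omega)))
        (xi_notMem_adjoin hP hP3 fun q hq => ⟨(hs q hq).2, hlt q hq⟩),
      ih hs, Finset.card_insert_of_notMem fun h => (hlt P h).false, pow_succ']

theorem degree_adjoin_xi_eq_two_pow_general (n : ℕ) (p : Fin n → ℕ)
    (hp : ∀ j, (p j).Prime) (hmono : StrictMono p) (h5 : ∀ j, 5 ≤ p j) :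
    Module.finrank ℚ
      ↥(IntermediateField.adjoin ℚ (Set.range fun j : Fin n => xi (p j))) = 2 ^ n := by
  have hrange : Set.range (fun j => xi (p j)) = xi '' (Finset.univ.image p : Finset ℕ) := by
    rw [Finset.coe_image, Finset.coe_univ, Set.image_univ, ← Set.range_comp]
    rfl
  rw [hrange, finrank_adjoin_xi_image, Finset.card_image_of_injective _ hmono.injective,
    Finset.card_univ, Fintype.card_fin]
  simpa using fun j => ⟨hp j, (h5 j).trans' (by norm_num)⟩

/-- For primes 5 ≤ p₁ < ⋯ < pₙ, the field ℚ(ξ₁,…,ξₙ) has degree 2ⁿ over ℚ. -/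
theorem degree_adjoin_xi_eq_two_pow (n : ℕ) (hn : 1 ≤ n) (p : Fin n → ℕ)
    (hp : ∀ j, (p j).Prime) (hmono : StrictMono p) (h5 : ∀ j, 5 ≤ p j) :
    Module.finrank ℚ
      ↥(IntermediateField.adjoin ℚ (Set.range fun j : Fin n => xi (p j))) = 2 ^ n :=
  degree_adjoin_xi_eq_two_pow_general n p hp hmono h5
end

section
/- Let p₁ < p₂ < ⋯ be the (infinitely many) primes p with p ≥ 5 and p ≡ 1 (mod 4). For each such prime p set m_p = (p − 1)²/8 (an integer) and θ_p = arccos((4m_p − 1)/(4m_p)). Then the family of real numbers (θ_p), indexed by the primes p ≥ 5 with p ≡ 1 (mod 4), is linearly independent over ℚ: for any finitely many distinct such primes p₁, …, pₙ and integers c₁, …, cₙ, if c₁θ_{p₁} + ⋯ + cₙθ_{pₙ} = 0 then c₁ = ⋯ = cₙ = 0. -/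
/-- m_p = (p − 1)²/8 as a real number. -/
noncomputable def mreal (p : ℕ) : ℝ := ((p : ℝ) - 1) ^ 2 / 8

/-- θ_p = arccos((4m_p − 1)/(4m_p)). -/
noncomputable def theta (p : ℕ) : ℝ :=
  Real.arccos ((4 * mreal p - 1) / (4 * mreal p))

open Finset IntermediateField Real Complex

/-!
Put `B = 4 m_p = (p - 1)² / 2`. Then `cos θ_p = (B - 1) / B`, so `B e^{± i θ_p} = B - 1 + x` with
`x² = -(2B - 1) = -p(p - 2)`, and a relation `∑ c_p θ_p = 0` turns into
`∏ (B_p - 1 + x_p) ^ |c_p| = ∏ B_p ^ |c_p|`, the sign of `x_p` being that of `c_p`.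
No nonempty product of the numbers `-p(p - 2)` is a rational square, since the largest prime
involved divides it exactly once; hence the products of the `x_p` are linearly independent over `ℚ`.
Writing `(B_p - 1 + x_p) ^ |c_p| = α_p + β_p x_p` and comparing the coefficients of `1` and of
`x_p` in the expanded product shows `β_p = 0`: so `e^{i c_p θ_p}` is real, `c_p θ_p ∈ πℤ`, and
Niven's theorem, applied to `cos θ_p ∈ (1/2, 1) ∩ ℚ`, leaves only `c_p = 0`.
-/

section SquareRoots

variable {K ι : Type*} [Field K] [CharZero K] {x : ι → K} {d : ι → ℚ}

lemma exists_add_mul_of_mem_adjoin_insert (hx : ∀ j, x j ^ 2 = d j) {t : ι} {T : Set ι}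
    {z : K} (hz : z ∈ adjoin ℚ (x '' insert t T)) :
    ∃ u ∈ adjoin ℚ (x '' T), ∃ v ∈ adjoin ℚ (x '' T), z = u + v * x t := by
  have halg : ∀ y ∈ x '' insert t T, IsAlgebraic ℚ y := by
    rintro _ ⟨j, -, rfl⟩
    exact IsAlgebraic.of_pow two_pos (by rw [hx j]; exact isAlgebraic_algebraMap (d j))
  rw [← mem_toSubalgebra, adjoin_toSubalgebra_of_isAlgebraic halg] at hz
  induction hz using Algebra.adjoin_induction with
  | mem y hy =>
    rw [Set.image_insert_eq, Set.mem_insert_iff] at hy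
    rcases hy with rfl | hy
    · exact ⟨0, zero_mem _, 1, one_mem _, by ring⟩
    · exact ⟨y, subset_adjoin ℚ _ hy, 0, zero_mem _, by ring⟩
  | algebraMap q =>
    exact ⟨algebraMap ℚ K q, IntermediateField.algebraMap_mem _ q, 0, zero_mem _, by ring⟩
  | add y z _ _ hy hz =>
    obtain ⟨u, hu, v, hv, rfl⟩ := hy
    obtain ⟨u', hu', v', hv', rfl⟩ := hz
    exact ⟨u + u', add_mem hu hu', v + v', add_mem hv hv', by ring⟩
  | mul y z _ _ hy hz =>
    obtain ⟨u, hu, v, hv, rfl⟩ := hy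
    obtain ⟨u', hu', v', hv', rfl⟩ := hz
    refine ⟨u * u' + v * v' * d t, ?_, u * v' + v * u', ?_, by linear_combination v * v' * hx t⟩
    · exact add_mem (mul_mem hu hu') (mul_mem (mul_mem hv hv') (SubfieldClass.ratCast_mem _ _))
    · exact add_mem (mul_mem hu hv') (mul_mem hv hu')

lemma sum_smul_prod_mem_adjoin (T : Finset ι) (g : Finset ι → ℚ) :
    ∑ S ∈ T.powerset, g S • ∏ j ∈ S, x j ∈ adjoin ℚ (x '' T) :=
  sum_mem fun _ hS => smul_mem _ <| prod_mem fun _ hj =>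
    subset_adjoin ℚ _ (Set.mem_image_of_mem x (mem_powerset.mp hS hj))

variable [DecidableEq ι]

lemma exists_isSquare_mul_prod_of_sq_eq (hx : ∀ j, x j ^ 2 = d j)
    (hd : ∀ S : Finset ι, S.Nonempty → ¬IsSquare (∏ j ∈ S, d j)) {T : Finset ι} {r : K}
    (hr : r ∈ adjoin ℚ (x '' T)) {e : ℚ} (he : r ^ 2 = e) :
    ∃ S ⊆ T, IsSquare (e * ∏ j ∈ S, d j) := by
  induction T using Finset.induction_on generalizing r e with
  | empty =>
    rw [coe_empty, Set.image_empty, adjoin_empty, mem_bot] at hr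
    obtain ⟨q, rfl⟩ := hr
    refine ⟨∅, empty_subset _, ?_⟩
    have hq : ((q ^ 2 : ℚ) : K) = e := by simpa using he
    rw [prod_empty, mul_one, ← Rat.cast_injective hq]
    exact ⟨q, sq q⟩
  | insert t T htT ih =>
    have hxt : x t ∉ adjoin ℚ (x '' T) := fun hmem => by
      obtain ⟨S, hST, hS⟩ := ih hmem (hx t)
      refine hd (insert t S) (insert_nonempty t S) ?_
      rwa [prod_insert (notMem_mono hST htT)]
    rw [coe_insert] at hr
    obtain ⟨u, hu, v, hv, rfl⟩ := exists_add_mul_of_mem_adjoin_insert hx hr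
    rcases eq_or_ne v 0 with rfl | hv0
    · obtain ⟨S, hST, hS⟩ := ih hu (by simpa using he)
      exact ⟨S, hST.trans (subset_insert t T), hS⟩
    rcases eq_or_ne u 0 with rfl | hu0
    · -- `(v x_t)² = e` gives `(v d_t)² = e d_t`
      obtain ⟨S, hST, hS⟩ := ih (e := e * d t) (mul_mem hv (SubfieldClass.ratCast_mem _ (d t)))
        (by push_cast; linear_combination (d t : K) * he - v ^ 2 * d t * hx t)
      refine ⟨insert t S, insert_subset_insert t hST, ?_⟩
      rwa [prod_insert (notMem_mono hST htT), ← mul_assoc]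
    · refine absurd ?_ hxt
      have h2uv : 2 * u * v ≠ 0 := by simp [hu0, hv0]
      rw [show x t = (e - u ^ 2 - v ^ 2 * d t) / (2 * u * v) by
        field_simp; linear_combination he - v ^ 2 * hx t]
      exact div_mem (sub_mem (sub_mem (SubfieldClass.ratCast_mem _ e) (pow_mem hu 2))
        (mul_mem (pow_mem hv 2) (SubfieldClass.ratCast_mem _ _)))
        (mul_mem (mul_mem (ofNat_mem _ 2) hu) hv)

lemma notMem_adjoin_of_notMem (hx : ∀ j, x j ^ 2 = d j)
    (hd : ∀ S : Finset ι, S.Nonempty → ¬IsSquare (∏ j ∈ S, d j)) {t : ι} {T : Finset ι}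
    (htT : t ∉ T) : x t ∉ adjoin ℚ (x '' T) := fun hmem => by
  obtain ⟨S, hST, hS⟩ := exists_isSquare_mul_prod_of_sq_eq hx hd hmem (hx t)
  refine hd (insert t S) (insert_nonempty t S) ?_
  rwa [prod_insert (notMem_mono hST htT)]

lemma eq_zero_of_sum_powerset_smul_prod_eq_zero (hx : ∀ j, x j ^ 2 = d j)
    (hd : ∀ S : Finset ι, S.Nonempty → ¬IsSquare (∏ j ∈ S, d j)) (T : Finset ι)
    (g : Finset ι → ℚ) (hg : ∑ S ∈ T.powerset, g S • ∏ j ∈ S, x j = 0) :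
    ∀ S ∈ T.powerset, g S = 0 := by
  induction T using Finset.induction_on generalizing g with
  | empty => simpa using hg
  | insert t T htT ih =>
    set X := ∑ S ∈ T.powerset, g S • ∏ j ∈ S, x j
    set Y := ∑ S ∈ T.powerset, g (insert t S) • ∏ j ∈ S, x j
    have hXY : X + Y * x t = 0 := by
      rw [← hg, sum_powerset_insert htT, sum_mul]
      congr 1
      refine sum_congr rfl fun S hS => ?_
      rw [prod_insert (notMem_of_mem_powerset_of_notMem hS htT), smul_mul_assoc, mul_comm]
    have hY : Y = 0 := by
      by_contra hY
      refine notMem_adjoin_of_notMem hx hd htT ?_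
      rw [show x t = -X / Y by field_simp; linear_combination hXY]
      exact div_mem (neg_mem (sum_smul_prod_mem_adjoin T g))
        (sum_smul_prod_mem_adjoin T (g ∘ insert t))
    have hX : X = 0 := by simpa [hY] using hXY
    intro S hS
    rw [powerset_insert, mem_union, mem_image] at hS
    rcases hS with hS | ⟨U, hU, rfl⟩
    · exact ih g hX S hS
    · exact ih (g ∘ insert t) hY U hU

theorem linearIndependent_prod_of_sq_eq (hx : ∀ j, x j ^ 2 = d j)
    (hd : ∀ S : Finset ι, S.Nonempty → ¬IsSquare (∏ j ∈ S, d j)) :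
    LinearIndependent ℚ fun S : Finset ι => ∏ j ∈ S, x j := by
  rw [linearIndependent_iff']
  intro s g hg S hS
  have hs : s ⊆ (s.sup id).powerset := fun U hU => mem_powerset.mpr (le_sup (f := id) hU)
  have key := eq_zero_of_sum_powerset_smul_prod_eq_zero hx hd (s.sup id)
    (fun U => if U ∈ s then g U else 0) (by
      simp_rw [ite_smul, zero_smul]
      rwa [sum_ite_mem, inter_eq_right.mpr hs]) S (hs hS)
  simpa [hS] using key

lemma eq_zero_of_prod_add_mul_eq [Fintype ι] (hx : ∀ j, x j ^ 2 = d j)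
    (hd : ∀ S : Finset ι, S.Nonempty → ¬IsSquare (∏ j ∈ S, d j)) {A B : ι → ℚ} {R : ℚ}
    (hR : R ≠ 0) (h : ∏ j, ((A j : K) + B j * x j) = R) (j : ι) : B j = 0 := by
  -- expand the product and compare the coefficients of `1` and of `x j`
  let g : Finset ι → ℚ := fun S => (∏ i ∈ S, B i) * (∏ i ∈ Sᶜ, A i) - if S = ∅ then R else 0
  have hexp : ∏ i, ((A i : K) + B i * x i)
      = ∑ S, (((∏ i ∈ S, B i) * ∏ i ∈ Sᶜ, A i : ℚ) : K) * ∏ i ∈ S, x i := by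
    simp_rw [add_comm (A _ : K), Fintype.prod_add, prod_mul_distrib]
    push_cast
    exact sum_congr rfl fun S _ => by ring
  have hg : ∑ S, g S • ∏ i ∈ S, x i = 0 := by
    simp only [g, sub_smul, sum_sub_distrib, Rat.smul_def, ← hexp, h]
    rw [Fintype.sum_eq_single ∅ fun S hS => by simp [hS]]
    simp
  have hli : LinearIndependent ℚ fun S : Finset ι => ∏ i ∈ S, x i :=
    linearIndependent_prod_of_sq_eq hx hd
  have hg0 : ∀ S, g S = 0 := Fintype.linearIndependent_iff.mp hli g hg
  have hA : ∏ i, A i = R := by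
    simpa only [g, if_true, prod_empty, one_mul, compl_empty, sub_eq_zero] using hg0 ∅
  have hBA : B j * ∏ i ∈ {j}ᶜ, A i = 0 := by
    simpa only [g, singleton_ne_empty, if_false, prod_singleton, sub_zero] using hg0 {j}
  rw [Fintype.prod_eq_mul_prod_compl j] at hA
  exact (mul_eq_zero.mp hBA).resolve_right (right_ne_zero_of_mul (hA ▸ hR))

lemma exists_pow_add_eq (a : ℚ) {y : K} {c : ℚ} (hy : y ^ 2 = c) (N : ℕ) :
    ∃ A B : ℚ, ((a : K) + y) ^ N = A + B * y := by
  induction N with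
  | zero => exact ⟨1, 0, by simp⟩
  | succ N ih =>
    obtain ⟨A, B, h⟩ := ih
    exact ⟨A * a + B * c, A + B * a, by rw [pow_succ, h]; push_cast; linear_combination B * hy⟩

theorem exists_ratCast_eq_pow_of_prod_pow_eq [Fintype ι] (hx : ∀ j, x j ^ 2 = d j)
    (hd : ∀ S : Finset ι, S.Nonempty → ¬IsSquare (∏ j ∈ S, d j)) (a : ι → ℚ) (N : ι → ℕ)
    {R : ℚ} (hR : R ≠ 0) (h : ∏ j, ((a j : K) + x j) ^ N j = R) (j : ι) :
    ∃ A : ℚ, ((a j : K) + x j) ^ N j = A := by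
  choose A B hAB using fun j => exists_pow_add_eq (a j) (hx j) (N j)
  refine ⟨A j, ?_⟩
  have hB : B j = 0 := eq_zero_of_prod_add_mul_eq hx hd hR (by simpa only [hAB] using h) j
  simp [hAB j, hB]

end SquareRoots

lemma not_isSquare_mul_of_prime {R : Type*} [CommMonoidWithZero R] [IsCancelMulZero R] {q M : R}
    (hq : Prime q) (hM : ¬q ∣ M) : ¬IsSquare (q * M) := by
  rintro ⟨r, hr⟩
  obtain ⟨s, rfl⟩ : q ∣ r := hq.dvd_of_dvd_pow (n := 2) (by rw [sq, ← hr]; exact dvd_mul_right q M)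
  refine hM ⟨s * s, mul_left_cancel₀ hq.ne_zero ?_⟩
  rw [hr]
  ac_rfl

lemma not_isSquare_prod_neg_mul_sub_two {ι : Type*} [DecidableEq ι] {p : ι → ℕ}
    (hinj : Function.Injective p) (hp : ∀ j, (p j).Prime) (h3 : ∀ j, 3 ≤ p j) {S : Finset ι}
    (hS : S.Nonempty) : ¬IsSquare (∏ j ∈ S, -((p j : ℚ) * (p j - 2))) := by
  -- the largest prime in `S` divides the product exactly once
  obtain ⟨k, hk, hmax⟩ := S.exists_max_image p hS
  have hpos : ∀ j, (0 : ℤ) < p j - 2 := fun j => by have := h3 j; omega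
  have hndvd : ∀ m : ℤ, 0 < m → m < p k → ¬(p k : ℤ) ∣ m := fun m hm hmk hdvd =>
    hm.ne' (Int.eq_zero_of_dvd_of_nonneg_of_lt hm.le hmk hdvd)
  have hprime : Prime (p k : ℤ) := Nat.prime_iff_prime_int.mp (hp k)
  rw [show ∏ j ∈ S, -((p j : ℚ) * (p j - 2)) = ((∏ j ∈ S, -((p j : ℤ) * (p j - 2)) : ℤ) : ℚ) by
    push_cast; rfl, Rat.isSquare_intCast_iff, ← mul_prod_erase S _ hk,
    show -((p k : ℤ) * (p k - 2)) = p k * -(p k - 2) by ring, mul_assoc]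
  refine not_isSquare_mul_of_prime hprime fun hdvd => ?_
  rcases hprime.dvd_or_dvd hdvd with hdvd | hdvd
  · exact hndvd _ (hpos k) (by omega) (dvd_neg.mp hdvd)
  obtain ⟨j, hj, hdvd⟩ := (hprime.dvd_finsetProd_iff _).mp hdvd
  have hlt : p j < p k := (hmax j (mem_of_mem_erase hj)).lt_of_ne
    fun h => ne_of_mem_erase hj (hinj h)
  rcases hprime.dvd_or_dvd (dvd_neg.mp hdvd) with hdvd | hdvd
  · exact hndvd _ (by have := h3 j; omega) (by omega) hdvd
  · exact hndvd _ (hpos j) (by omega) hdvd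

lemma mul_cos_arccos_sub_one_div {B : ℝ} (hB : 1 / 2 ≤ B) :
    B * Real.cos (arccos ((B - 1) / B)) = B - 1 := by
  have hB0 : 0 < B := by linarith
  rw [Real.cos_arccos (by rw [le_div_iff₀ hB0]; linarith) (by rw [div_le_one hB0]; linarith)]
  field_simp

lemma mul_sin_arccos_sub_one_div {B : ℝ} (hB : 1 / 2 ≤ B) :
    B * Real.sin (arccos ((B - 1) / B)) = √(2 * B - 1) := by
  have hB0 : 0 < B := by linarith
  rw [Real.sin_arccos, show 1 - ((B - 1) / B) ^ 2 = (2 * B - 1) / B ^ 2 by field_simp; ring,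
    Real.sqrt_div' _ (sq_nonneg B), Real.sqrt_sq hB0.le]
  field_simp

lemma exists_sq_eq_and_pow_natAbs_mul_exp_eq {B θ s : ℝ} (hcos : B * Real.cos θ = B - 1)
    (hsin : B * Real.sin θ = s) (c : ℤ) :
    ∃ x : ℂ, x ^ 2 = -(s : ℂ) ^ 2 ∧
      (B : ℂ) ^ c.natAbs * exp (c * θ * I) = (B - 1 + x) ^ c.natAbs := by
  have hcos' : (B : ℂ) * Complex.cos θ = B - 1 := by exact_mod_cast hcos
  have hsin' : (B : ℂ) * Complex.sin θ = s := by exact_mod_cast hsin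
  obtain ⟨N, rfl | rfl⟩ := Int.eq_nat_or_neg c
  · refine ⟨I * s, by linear_combination (s : ℂ) ^ 2 * I_sq, ?_⟩
    rw [Int.natAbs_natCast, show ((N : ℤ) : ℂ) * θ * I = N * (θ * I) by push_cast; ring,
      Complex.exp_nat_mul, ← mul_pow, exp_mul_I]
    congr 1
    linear_combination hcos' + I * hsin'
  · refine ⟨-(I * s), by linear_combination (s : ℂ) ^ 2 * I_sq, ?_⟩
    rw [Int.natAbs_neg, Int.natAbs_natCast, show ((-N : ℤ) : ℂ) * θ * I = N * (-θ * I) by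
      push_cast; ring, Complex.exp_nat_mul, ← mul_pow, exp_mul_I, Complex.cos_neg, Complex.sin_neg]
    congr 1
    linear_combination hcos' - I * hsin'

lemma sin_eq_zero_of_ofReal_mul_exp_mul_I_eq_ofReal {r θ y : ℝ} (hr : r ≠ 0)
    (h : (r : ℂ) * exp (θ * I) = y) : Real.sin θ = 0 := by
  have him := congrArg Complex.im h
  rwa [im_ofReal_mul, exp_ofReal_mul_I_im, ofReal_im, mul_eq_zero, or_iff_right hr] at him

lemma sin_int_mul_arccos_ne_zero {B : ℚ} (hB : 2 < B) {c : ℤ} (hc : c ≠ 0) :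
    Real.sin (c * arccos ((B - 1) / B)) ≠ 0 := by
  intro h
  obtain ⟨k, hk⟩ := Real.sin_eq_zero_iff.mp h
  have hB0 : (0 : ℝ) < B := by exact_mod_cast hB.trans' two_pos
  have hlo : 1 / 2 < ((B : ℝ) - 1) / B := by
    rw [lt_div_iff₀ hB0]; linarith [show (2 : ℝ) < B by exact_mod_cast hB]
  have hhi : ((B : ℝ) - 1) / B < 1 := by rw [div_lt_one hB0]; linarith
  have hcos : Real.cos (arccos ((B - 1) / B)) = ((B - 1) / B : ℚ) := by
    rw [Real.cos_arccos (by linarith) hhi.le]; push_cast; rfl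
  have hθ : arccos ((B - 1) / B) = (k / c : ℚ) * π := by
    push_cast
    field_simp
    linarith
  have := niven ⟨_, hθ⟩ ⟨_, hcos⟩
  rw [hcos] at this
  push_cast at this
  simp only [Set.mem_insert_iff, Set.mem_singleton_iff] at this
  rcases this with h | h | h | h | h <;> linarith

theorem eq_zero_of_sum_int_mul_arccos_eq_zero {ι : Type*} [Fintype ι] [DecidableEq ι]
    {B : ι → ℚ} (hB : ∀ j, 2 < B j)
    (hd : ∀ S : Finset ι, S.Nonempty → ¬IsSquare (∏ j ∈ S, -(2 * B j - 1))) {c : ι → ℤ}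
    (h : ∑ j, c j * arccos ((B j - 1) / B j) = 0) (j : ι) : c j = 0 := by
  by_contra hc
  have hB' : ∀ j, (1 / 2 : ℝ) ≤ B j := fun j => by have := hB j; rify at this; linarith
  choose x hx hterm using fun j => exists_sq_eq_and_pow_natAbs_mul_exp_eq
    (mul_cos_arccos_sub_one_div (hB' j)) (mul_sin_arccos_sub_one_div (hB' j)) (c j)
  push_cast at hterm
  have hx' : ∀ j, x j ^ 2 = ((-(2 * B j - 1) : ℚ) : ℂ) := fun j => by
    rw [hx, ← ofReal_pow, Real.sq_sqrt (by linarith [hB' j])]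
    push_cast; ring
  have hrel : ∏ j, (((B j - 1 : ℚ) : ℂ) + x j) ^ (c j).natAbs
      = ((∏ j, B j ^ (c j).natAbs : ℚ) : ℂ) := by
    push_cast
    simp_rw [← hterm, prod_mul_distrib, ← Complex.exp_sum]
    rw [show ∑ j, (c j : ℂ) * arccos ((B j - 1) / B j) * I
        = ((∑ j, c j * arccos ((B j - 1) / B j) : ℝ) : ℂ) * I by push_cast; rw [sum_mul], h]
    simp
  have hBN : ∏ j, B j ^ (c j).natAbs ≠ 0 :=
    prod_ne_zero_iff.mpr fun j _ => pow_ne_zero _ (two_pos.trans (hB j)).ne'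
  obtain ⟨A, hA⟩ := exists_ratCast_eq_pow_of_prod_pow_eq hx' hd _ _ hBN hrel j
  have hBj : (B j : ℝ) ^ (c j).natAbs ≠ 0 := pow_ne_zero _ (by linarith [hB' j])
  refine sin_int_mul_arccos_ne_zero (hB j) hc
    (sin_eq_zero_of_ofReal_mul_exp_mul_I_eq_ofReal hBj (y := A) ?_)
  push_cast at hA ⊢
  rw [hterm, hA]

theorem theta_linearIndependent_general (n : ℕ) (p : Fin n → ℕ)
    (hinj : Function.Injective p) (hp : ∀ j, (p j).Prime)
    (h5 : ∀ j, 5 ≤ p j) (c : Fin n → ℤ)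
    (h : ∑ j : Fin n, (c j : ℝ) * theta (p j) = 0) :
    ∀ j, c j = 0 := by
  -- `4 m_p`, as a rational number
  set B : Fin n → ℚ := fun j => ((p j : ℚ) - 1) ^ 2 / 2
  have hB : ∀ j, 2 < B j := fun j => by
    have : (5 : ℚ) ≤ p j := by exact_mod_cast h5 j
    simp only [B]; nlinarith
  have htheta : ∀ j, theta (p j) = arccos ((B j - 1) / B j) := fun j => by
    simp only [theta, mreal, B]; push_cast; ring_nf
  have hd : ∀ S : Finset (Fin n), S.Nonempty → ¬IsSquare (∏ j ∈ S, -(2 * B j - 1)) :=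
    fun S hS => by
      convert not_isSquare_prod_neg_mul_sub_two hinj hp (fun j => (h5 j).trans' (by norm_num)) hS
        using 3
      ring
  simp_rw [htheta] at h
  exact eq_zero_of_sum_int_mul_arccos_eq_zero hB hd h

/-- The numbers θ_p, for distinct primes p ≥ 5 with p ≡ 1 (mod 4), are linearly
independent over ℚ: any vanishing integer linear combination is trivial. -/
theorem theta_linearIndependent (n : ℕ) (p : Fin n → ℕ)
    (hinj : Function.Injective p) (hp : ∀ j, (p j).Prime)
    (h5 : ∀ j, 5 ≤ p j) (h4 : ∀ j, p j % 4 = 1) (c : Fin n → ℤ)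
    (h : ∑ j : Fin n, (c j : ℝ) * theta (p j) = 0) :
    ∀ j, c j = 0 :=
  theta_linearIndependent_general n p hinj hp h5 c h
end

section
/- For every integer m ≥ 1, the complex number z_m = ((4m − 1) + i·√(8m − 1))/(4m) is not a root of unity; that is, there is no integer r ≥ 1 with (z_m)ʳ = 1. -/
/-!
Put `c = 2m` and `u = c z_m`. Then `u` and `conj u` have sum `2c Re z_m = 4m − 1`, which is odd,
and product `c² |z_m|² = 4m²`, which is even. Hence the Lucas sums `uⁿ + conj uⁿ` are integers
satisfying `Vₙ₊₂ = (4m − 1) Vₙ₊₁ − 4m² Vₙ`, so they are odd for `n ≥ 1`. If `z_mʳ = 1` with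
`r ≥ 1`, then `uʳ + conj uʳ = 2cʳ` would be even.
-/

open Complex ComplexConjugate

def lucasV (P Q : ℤ) : ℕ → ℤ
  | 0 => 2
  | 1 => P
  | n + 2 => P * lucasV P Q (n + 1) - Q * lucasV P Q n

theorem lucasV_succ_odd {P Q : ℤ} (hP : Odd P) (hQ : Even Q) (n : ℕ) :
    Odd (lucasV P Q (n + 1)) := by
  induction n with
  | zero => exact hP
  | succ n ih => exact (hP.mul ih).sub_even (hQ.mul_right _)

theorem lucasV_eq_pow_add_pow {R : Type*} [CommRing R] {P Q : ℤ} {u v : R}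
    (hsum : u + v = P) (hprod : u * v = Q) (n : ℕ) : (lucasV P Q n : R) = u ^ n + v ^ n := by
  induction n using Nat.twoStepInduction with
  | zero => norm_num [lucasV]
  | one => simp [lucasV, hsum]
  | more n ih₀ ih₁ =>
    rw [lucasV, Int.cast_sub, Int.cast_mul, Int.cast_mul, ih₀, ih₁, ← hsum, ← hprod]
    ring

theorem pow_add_pow_ne_two_mul_pow {R : Type*} [CommRing R] [CharZero R] {P Q : ℤ} {u v : R}
    (hP : Odd P) (hQ : Even Q) (hsum : u + v = P) (hprod : u * v = Q) (c : ℤ) {r : ℕ}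
    (hr : r ≠ 0) : u ^ r + v ^ r ≠ 2 * (c : R) ^ r := by
  intro h
  rw [← lucasV_eq_pow_add_pow hsum hprod] at h
  have hV : lucasV P Q r = 2 * c ^ r := by exact_mod_cast h
  obtain ⟨n, rfl⟩ := Nat.exists_eq_succ_of_ne_zero hr
  exact Int.not_even_iff_odd.mpr (lucasV_succ_odd hP hQ n) (hV ▸ even_two_mul _)

theorem Complex.pow_ne_one_of_normSq_eq_one_of_odd {z : ℂ} (hz : normSq z = 1) {a c : ℤ} (ha : Odd a)
    (hc : Even c) (hre : 2 * c * z.re = a) {r : ℕ} (hr : r ≠ 0) : z ^ r ≠ 1 := by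
  intro hzr
  have hsum : c * z + conj (c * z) = a := by
    rw [add_conj]
    exact_mod_cast congrArg ((↑) : ℝ → ℂ) (by simpa [mul_assoc] using hre)
  have hprod : c * z * conj (c * z) = (c ^ 2 : ℤ) := by
    rw [mul_conj, map_mul, normSq_intCast, hz]
    push_cast
    ring
  refine pow_add_pow_ne_two_mul_pow ha (hc.pow_of_ne_zero two_ne_zero) hsum hprod c hr ?_
  rw [← map_pow, mul_pow, hzr, mul_one, map_pow, map_intCast]
  ring

/-- For every integer m ≥ 1, the complex number
z_m = ((4m − 1) + i·√(8m − 1))/(4m) is not a root of unity. -/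
theorem zm_not_root_of_unity (m : ℕ) (hm : 1 ≤ m) :
    ¬ ∃ r : ℕ, 1 ≤ r ∧
      (((4 * (m : ℂ) - 1) + Complex.I * (Real.sqrt (8 * (m : ℝ) - 1) : ℝ)) /
        (4 * (m : ℂ))) ^ r = 1 := by
  rintro ⟨r, hr, hzr⟩
  set s := Real.sqrt (8 * (m : ℝ) - 1)
  have hs : s ^ 2 = 8 * m - 1 := Real.sq_sqrt (by linarith [(Nat.one_le_cast (α := ℝ)).mpr hm])
  have hm0 : (m : ℝ) ≠ 0 := by positivity
  have hz : ((4 * (m : ℂ) - 1) + I * (s : ℂ)) / (4 * (m : ℂ)) =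
      ⟨(4 * m - 1) / (4 * m), s / (4 * m)⟩ := by
    rw [mk_eq_add_mul_I]
    push_cast
    field_simp
  rw [hz] at hzr
  refine pow_ne_one_of_normSq_eq_one_of_odd (a := 4 * m - 1) (c := 2 * m) ?_ ?_ ?_ ?_ (by omega) hzr
  · rw [normSq_mk]
    field_simp
    linear_combination hs
  · exact ⟨2 * m - 1, by ring⟩
  · exact even_two_mul _
  · push_cast
    field_simp
    ring
end
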